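/- The function f is an exact solution of the relativistic Vlasov–Fokker–Planck equation: for every t > 0 and all x, p ∈ ℝ, ∂f/∂t (t,x,p) + v(p) · ∂f/∂x (t,x,p) = (1/(β² 𝔇)) · ∂/∂p [ (∂f/∂p)(t,x,p) + β v(p) f(t,x,p) ], where the outer ∂/∂p is the derivative at p of the function q ↦ (∂f/∂p)(t,x,q) + β v(q) f(t,x,q). -/

import Mathlib

open MeasureTheory

/-- Relativistic energy `ε(p) = √(m² + p²)`. -/
noncomputable def eps (m p : ℝ) : ℝ := Real.sqrt (m ^ 2 + p ^ 2)

/-- Relativistic velocity `v(p) = p/ε(p)`. -/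
noncomputable def vel (m p : ℝ) : ℝ := p / eps m p

/-- The distribution function
`f(t,x,p) = exp(α − β ε(p)) + (1/2π) ∫ g(k) exp(−β ε(p) − i β 𝔇 k p + i k x − 𝔇 k² t) dk`. -/
noncomputable def fdist (m β D α : ℝ) (g : ℝ → ℂ) (t x p : ℝ) : ℂ :=
  Complex.exp (↑(α - β * eps m p)) +
    (2 * Real.pi)⁻¹ * ∫ k : ℝ, g k * Complex.exp (-(↑(β * eps m p))
      - Complex.I * ↑(β * D * k * p) + Complex.I * ↑(k * x) - ↑(D * k ^ 2 * t))

/-!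
With `u(t,z) = ∫ g(k) e^{ikz - 𝔇k²t} dk`, a solution of the heat equation `∂ₜu = 𝔇 ∂_z²u`,
one has `f(t,x,p) = e^{-βε(p)} W(t, x - β𝔇p)` with `W = e^α + u/2π`. Since
`∂ₚe^{-βε} = -βv e^{-βε}`, for any such product the flux is `∂ₚf + βvf = -β𝔇 e^{-βε} ∂_zW`;
differentiating once more, the right-hand side of the equation becomes
`e^{-βε}(v ∂_zW + 𝔇 ∂_z²W)` while the left-hand side is `e^{-βε}(∂ₜW + v ∂_zW)`. So the
equation reduces to the heat equation for `W`, which holds mode by mode: differentiation under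
the integral sign is justified because `g` has integrable moments and the modes are bounded
for `t ≥ 0`.
-/

open Complex

lemma eps_pos {m : ℝ} (hm : m ≠ 0) (p : ℝ) : 0 < eps m p := Real.sqrt_pos.2 (by positivity)

lemma hasDerivAt_eps {m : ℝ} (hm : m ≠ 0) (p : ℝ) : HasDerivAt (eps m) (vel m p) p := by
  have hsq : HasDerivAt (fun q : ℝ => m ^ 2 + q ^ 2) (2 * p) p := by
    simpa using (hasDerivAt_pow 2 p).const_add (m ^ 2)
  refine ((Real.hasDerivAt_sqrt (by positivity)).comp p hsq).congr_deriv ?_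
  have := (eps_pos hm p).ne'
  rw [vel, eps] at *
  field_simp

noncomputable def boltzmann (m β p : ℝ) : ℝ := Real.exp (-(β * eps m p))

lemma hasDerivAt_boltzmann {m : ℝ} (hm : m ≠ 0) (β p : ℝ) :
    HasDerivAt (boltzmann m β) (-(β * vel m p) * boltzmann m β p) p :=
  ((hasDerivAt_eps hm p).const_mul β).neg.exp.congr_deriv
    (by simp only [boltzmann, Pi.neg_apply]; ring)

lemma hasDerivAt_boltzmann_mul_comp {m : ℝ} (hm : m ≠ 0) (β a x q : ℝ) {w : ℝ → ℂ} {w' : ℂ}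
    (hw : HasDerivAt w w' (x - a * q)) :
    HasDerivAt (fun r => (boltzmann m β r : ℂ) * w (x - a * r))
      (-(β * vel m q : ℂ) * (boltzmann m β q * w (x - a * q))
        + boltzmann m β q * (-a * w')) q := by
  have hlin : HasDerivAt (fun r : ℝ => x - a * r) (-a) q := by
    simpa using ((hasDerivAt_id q).const_mul a).const_sub x
  refine ((hasDerivAt_boltzmann hm β q).ofReal_comp.mul (hw.scomp q hlin)).congr_deriv ?_
  simp only [Function.comp_def, real_smul]
  push_cast
  ring

noncomputable def heatSolution (D : ℝ) (h : ℝ → ℂ) (t z : ℝ) : ℂ :=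
  ∫ k : ℝ, h k * cexp (I * k * z - D * k ^ 2 * t)

section heatSolution

variable {D t : ℝ} {h : ℝ → ℂ}

lemma norm_cexp_heatMode_le_one (hD : 0 ≤ D) (ht : 0 ≤ t) (k z : ℝ) :
    ‖cexp (I * k * z - D * k ^ 2 * t)‖ ≤ 1 := by
  rw [norm_exp, Real.exp_le_one_iff]
  have : 0 ≤ D * k ^ 2 * t := by positivity
  simpa [← ofReal_pow, ← ofReal_mul] using this

lemma integrable_mul_heatMode (hD : 0 ≤ D) (ht : 0 ≤ t) (hh : Integrable h) (z : ℝ) :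
    Integrable fun k : ℝ => h k * cexp (I * k * z - D * k ^ 2 * t) :=
  hh.mul_bdd (by fun_prop : Continuous _).aestronglyMeasurable
    (ae_of_all _ (norm_cexp_heatMode_le_one hD ht · z))

lemma hasDerivAt_heatSolution_space (hD : 0 ≤ D) (ht : 0 ≤ t) (hh : Integrable h)
    (hkh : Integrable fun k : ℝ => (k : ℂ) * h k) (z : ℝ) :
    HasDerivAt (heatSolution D h t) (heatSolution D (fun k => I * k * h k) t z) z := by
  have hmode (k y : ℝ) : HasDerivAt (fun y : ℝ => h k * cexp (I * k * y - D * k ^ 2 * t))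
      (I * k * h k * cexp (I * k * y - D * k ^ 2 * t)) y := by
    refine ((((hasDerivAt_id y).ofReal_comp.const_mul (I * k)).sub_const
      (D * k ^ 2 * t : ℂ)).cexp.const_mul (h k)).congr_deriv ?_
    simp only [id, ofReal_one]
    ring
  have hbound (k y : ℝ) : ‖I * k * h k * cexp (I * k * y - D * k ^ 2 * t)‖ ≤ ‖(k : ℂ) * h k‖ := by
    rw [norm_mul _ (cexp _), mul_assoc, norm_mul I, norm_I, one_mul]
    exact mul_le_of_le_one_right (norm_nonneg _) (norm_cexp_heatMode_le_one hD ht k y)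
  exact (hasDerivAt_integral_of_dominated_loc_of_deriv_le Filter.univ_mem
    (F' := fun (y k : ℝ) => I * k * h k * cexp (I * k * y - D * k ^ 2 * t))
    (Filter.Eventually.of_forall fun y => by have := hh.1; fun_prop)
    (integrable_mul_heatMode hD ht hh z)
    (by have := hh.1; fun_prop)
    (ae_of_all _ fun k y _ => hbound k y) hkh.norm (ae_of_all _ fun k y _ => hmode k y)).2

lemma hasDerivAt_heatSolution_time (hD : 0 ≤ D) (ht : 0 < t) (hh : Integrable h)
    (hk2h : Integrable fun k : ℝ => (k : ℂ) ^ 2 * h k) (z : ℝ) :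
    HasDerivAt (fun s => heatSolution D h s z)
      (D * heatSolution D (fun k => I * k * (I * k * h k)) t z) t := by
  have hmode (k s : ℝ) : HasDerivAt (fun s : ℝ => h k * cexp (I * k * z - D * k ^ 2 * s))
      (D * (I * k * (I * k * h k) * cexp (I * k * z - D * k ^ 2 * s))) s := by
    refine (((((hasDerivAt_id s).ofReal_comp.const_mul (D * k ^ 2 : ℂ)).const_sub
      (I * k * z)).cexp).const_mul (h k)).congr_deriv ?_
    simp only [id, ofReal_one]
    linear_combination (-(D * k ^ 2 * h k * cexp (I * k * z - D * k ^ 2 * s))) * I_sq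
  have hbound (k s : ℝ) (hs : s ∈ Set.Ioi 0) :
      ‖D * (I * k * (I * k * h k) * cexp (I * k * z - D * k ^ 2 * s))‖
        ≤ D * ‖(k : ℂ) ^ 2 * h k‖ := by
    have hI : I * k * (I * k * h k) = -(k ^ 2 * h k) := by linear_combination k ^ 2 * h k * I_sq
    rw [hI, norm_mul, norm_real, Real.norm_of_nonneg hD, norm_mul, norm_neg]
    exact mul_le_mul_of_nonneg_left (mul_le_of_le_one_right (norm_nonneg _)
      (norm_cexp_heatMode_le_one hD (le_of_lt hs) k z)) hD
  refine (hasDerivAt_integral_of_dominated_loc_of_deriv_le (Ioi_mem_nhds ht)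
    (F := fun (s k : ℝ) => h k * cexp (I * k * z - D * k ^ 2 * s))
    (F' := fun (s k : ℝ) => D * (I * k * (I * k * h k) * cexp (I * k * z - D * k ^ 2 * s)))
    (Filter.Eventually.of_forall fun s => by have := hh.1; fun_prop)
    (integrable_mul_heatMode hD ht.le hh z) (by have := hh.1; fun_prop) (ae_of_all _ hbound)
    (hk2h.norm.const_mul D) (ae_of_all _ fun k s _ => hmode k s)).2.congr_deriv ?_
  exact integral_const_mul _ _

end heatSolution

lemma SchwartzMap.integrable_ofReal_pow_mul (g : SchwartzMap ℝ ℂ) (n : ℕ) :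
    Integrable fun k : ℝ => (k : ℂ) ^ n * g k :=
  (g.integrable_pow_mul volume n).mono' (by fun_prop)
    (ae_of_all _ fun k => by simp only [norm_mul, norm_pow, norm_real, le_refl])

lemma fdist_eq (m β D α : ℝ) (g : ℝ → ℂ) (t x p : ℝ) :
    fdist m β D α g t x p = boltzmann m β p
      * (cexp α + (2 * Real.pi)⁻¹ * heatSolution D g t (x - β * D * p)) := by
  have hmode (k : ℝ) : g k * cexp (-(↑(β * eps m p)) - I * ↑(β * D * k * p) + I * ↑(k * x)
      - ↑(D * k ^ 2 * t))
      = boltzmann m β p * (g k * cexp (I * k * ↑(x - β * D * p) - D * k ^ 2 * t)) := by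
    rw [boltzmann, ofReal_exp, mul_left_comm, ← Complex.exp_add]
    push_cast
    ring_nf
  have hM : cexp ↑(α - β * eps m p) = boltzmann m β p * cexp α := by
    rw [boltzmann, ofReal_exp, ← Complex.exp_add]
    push_cast
    ring_nf
  rw [fdist, heatSolution, integral_congr_ae (ae_of_all _ hmode), integral_const_mul, hM]
  ring

theorem solves_VFP_of_heat {m β D : ℝ} (hm : m ≠ 0) (hβ : β ≠ 0) (hD : D ≠ 0)
    {F : ℝ → ℝ → ℝ → ℂ} {W W₁ W₂ : ℝ → ℝ → ℂ} {t x p : ℝ}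
    (hF : ∀ t x p, F t x p = boltzmann m β p * W t (x - β * D * p))
    (hWt : HasDerivAt (fun s => W s (x - β * D * p)) (D * W₂ t (x - β * D * p)) t)
    (hWz : ∀ z, HasDerivAt (W t) (W₁ t z) z)
    (hW₁z : HasDerivAt (W₁ t) (W₂ t (x - β * D * p)) (x - β * D * p)) :
    deriv (fun s => F s x p) t + ↑(vel m p) * deriv (fun y => F t y p) x
      = ((1 / (β ^ 2 * D) : ℝ) : ℂ) *
        deriv (fun q => deriv (fun r => F t x r) q + ↑(β * vel m q) * F t x q) p := by
  obtain rfl : F = fun t x p => boltzmann m β p * W t (x - β * D * p) :=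
    funext fun t => funext fun x => funext fun p => hF t x p
  have hflux : (fun q => deriv (fun r => (boltzmann m β r : ℂ) * W t (x - β * D * r)) q
      + ↑(β * vel m q) * (boltzmann m β q * W t (x - β * D * q)))
      = fun q => -(β * D : ℂ) * (boltzmann m β q * W₁ t (x - β * D * q)) := by
    funext q
    rw [(hasDerivAt_boltzmann_mul_comp hm β (β * D) x q (hWz _)).deriv]
    push_cast
    ring
  rw [hflux, (hWt.const_mul _).deriv, ((hWz _).comp_sub_const x _ |>.const_mul _).deriv,
    ((hasDerivAt_boltzmann_mul_comp hm β (β * D) x p hW₁z).const_mul _).deriv]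
  have hβ' : (β : ℂ) ≠ 0 := ofReal_ne_zero.2 hβ
  have hD' : (D : ℂ) ≠ 0 := ofReal_ne_zero.2 hD
  push_cast
  field_simp
  ring

theorem fdist_solves_VFP_general (m β D α : ℝ) (hm : 0 < m) (hβ : 0 < β) (hD : 0 < D)
    (g : SchwartzMap ℝ ℂ)
    (t x p : ℝ) (ht : 0 < t) :
    deriv (fun s : ℝ => fdist m β D α (⇑g) s x p) t
      + ↑(vel m p) * deriv (fun y : ℝ => fdist m β D α (⇑g) t y p) x
    = ((1 / (β ^ 2 * D) : ℝ) : ℂ) *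
        deriv (fun q : ℝ => deriv (fun r : ℝ => fdist m β D α (⇑g) t x r) q
          + ↑(β * vel m q) * fdist m β D α (⇑g) t x q) p := by
  have hmom := g.integrable_ofReal_pow_mul
  have hkg : Integrable fun k : ℝ => (k : ℂ) * g k := by simpa using hmom 1
  have hIkg : Integrable fun k : ℝ => I * k * g k := by simpa [mul_assoc] using hkg.const_mul I
  have hkIkg : Integrable fun k : ℝ => (k : ℂ) * (I * k * g k) :=
    ((hmom 2).const_mul I).congr (ae_of_all _ fun k => by ring)
  refine solves_VFP_of_heat hm.ne' hβ.ne' hD.ne' (fdist_eq m β D α g)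
    (W := fun t z => cexp α + (2 * Real.pi)⁻¹ * heatSolution D g t z)
    (W₁ := fun t z => (2 * Real.pi)⁻¹ * heatSolution D (fun k => I * k * g k) t z)
    (W₂ := fun t z => (2 * Real.pi)⁻¹ * heatSolution D (fun k => I * k * (I * k * g k)) t z)
    ?_ (fun z => ?_) ?_
  · exact (((hasDerivAt_heatSolution_time hD.le ht g.integrable (hmom 2) _).const_mul _).const_add
      _).congr_deriv (by ring)
  · exact ((hasDerivAt_heatSolution_space hD.le ht.le g.integrable hkg z).const_mul _).const_add _
  · exact (hasDerivAt_heatSolution_space hD.le ht.le hIkg hkIkg _).const_mul _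

/-- `f` is an exact solution of the relativistic Vlasov–Fokker–Planck
equation `∂_t f + v ∂_x f = (1/(β²𝔇)) ∂_p(∂_p f + β v f)` for every `t > 0`, `x, p ∈ ℝ`. -/
theorem fdist_solves_VFP (m β D α : ℝ) (hm : 0 < m) (hβ : 0 < β) (hD : 0 < D)
    (g : SchwartzMap ℝ ℂ) (hg : ∀ k : ℝ, g (-k) = (starRingEnd ℂ) (g k))
    (t x p : ℝ) (ht : 0 < t) :
    deriv (fun s : ℝ => fdist m β D α (⇑g) s x p) t
      + ↑(vel m p) * deriv (fun y : ℝ => fdist m β D α (⇑g) t y p) x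
    = ((1 / (β ^ 2 * D) : ℝ) : ℂ) *
        deriv (fun q : ℝ => deriv (fun r : ℝ => fdist m β D α (⇑g) t x r) q
          + ↑(β * vel m q) * fdist m β D α (⇑g) t x q) p :=
  fdist_solves_VFP_general m β D α hm hβ hD g t x p ht
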